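/- arXiv:1003.0502 — 2 statements merged into one kernel-verified Lean document; each statement's English description precedes it below -/
import Mathlib

section
/- For every ideal I ⊆ ℂ[z_1,…,z_d], there exist positive reals λ_1,…,λ_d such that the ideal J = {f(λ_1 z_1,…,λ_d z_d) : f ∈ I} has the stable division property with respect to the ℓ¹ norm: there exist a finite generating set g_1,…,g_k of J and a constant C such that every h ∈ J can be written h = ∑ a_i g_i with ∑ ‖a_i g_i‖ ≤ C‖h‖. -/
open MvPolynomial Finset

noncomputable section

/-- The ℓ¹ norm of a polynomial: the sum of absolute values of its coefficients. -/
def l1 {d : ℕ} (p : MvPolynomial (Fin d) ℂ) : ℝ :=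
  ∑ α ∈ p.support, ‖p.coeff α‖

/-- total degree |α| of a multi-index -/
def mdeg {d : ℕ} (α : Fin d →₀ ℕ) : ℕ := α.sum fun _ n => n

/-- Drury–Arveson weight  α!/|α|! -/
def daW {d : ℕ} (α : Fin d →₀ ℕ) : ℝ :=
  (∏ i, Nat.factorial (α i)) / Nat.factorial (mdeg α)

/-- Drury–Arveson inner product on polynomials -/
def daInner {d : ℕ} (p q : MvPolynomial (Fin d) ℂ) : ℂ :=
  ∑ α ∈ p.support ∪ q.support, (starRingEnd ℂ) (p.coeff α) * q.coeff α * (daW α : ℂ)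

/-- Drury–Arveson squared norm -/
def daNormSq {d : ℕ} (p : MvPolynomial (Fin d) ℂ) : ℝ :=
  ∑ α ∈ p.support, ‖p.coeff α‖ ^ 2 * daW α

/-- vector valued versions -/
def vInner {d r : ℕ} (p q : Fin r → MvPolynomial (Fin d) ℂ) : ℂ := ∑ t, daInner (p t) (q t)

def vNormSq {d r : ℕ} (p : Fin r → MvPolynomial (Fin d) ℂ) : ℝ := ∑ t, daNormSq (p t)

def vNorm {d r : ℕ} (p : Fin r → MvPolynomial (Fin d) ℂ) : ℝ := Real.sqrt (vNormSq p)

def vHomog {d r : ℕ} (p : Fin r → MvPolynomial (Fin d) ℂ) (n : ℕ) : Prop :=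
  ∀ t, (p t).IsHomogeneous n

/-!
Take a lex Gröbner basis `g₁, …, g_k` of `I` (Dickson's lemma) and let `D` bound every exponent
occurring in the `g_j`. Substituting `z_i ↦ t ^ (D + 1) ^ (d - 1 - i) • z_i` multiplies the
coefficient of `z ^ α` by `t ^ w(α)`, where `w(α) = ∑ α_i (D + 1) ^ (d - 1 - i)` is `α` read as a
base-`(D + 1)` numeral with leading digit `α₀`; so `w` is strictly lex-monotone on exponents with
entries `≤ D`. Supports, degrees and hence the Gröbner property survive the substitution, and for
`t` large every rescaled generator satisfies `‖g - LT(g)‖ ≤ θ |LC(g)|` with `θ = 1/2`.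

For such a basis the division algorithm is ℓ¹-stable: a reduction step cancelling the leading
term `c z^μ` of the current remainder costs at most `(1 + θ)|c|` in `∑ ‖a_i g_i‖`, while the ℓ¹
norm of the remainder drops by at least `(1 - θ)|c|`; so the total cost is at most
`(1 + θ)/(1 - θ) ‖h‖`.
-/

open MonomialOrder
open scoped MonomialOrder

theorem exists_finset_le_of_wellQuasiOrderedLE {α : Type*} [PartialOrder α]
    [WellQuasiOrderedLE α] (S : Set α) : ∃ F : Finset α, ↑F ⊆ S ∧ ∀ s ∈ S, ∃ b ∈ F, b ≤ s := by
  have hS := Set.isPWO_of_wellQuasiOrderedLE S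
  have hfin : {x | Minimal (· ∈ S) x}.Finite :=
    (setOfPred_minimal_antichain _).finite_of_partiallyWellOrderedOn
      (hS.mono (setOfPred_minimal_subset _))
  refine ⟨hfin.toFinset, fun x hx => (hfin.mem_toFinset.1 hx).prop, fun s hs => ?_⟩
  obtain ⟨b, hbs, hb⟩ := hS.exists_le_minimal hs
  exact ⟨b, hfin.mem_toFinset.2 hb, hbs⟩

namespace MvPolynomial

variable {σ R : Type*} [CommSemiring R]

lemma support_monomial_mul_subset [DecidableEq σ] (δ : σ →₀ ℕ) (b : R) (p : MvPolynomial σ R) :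
    (monomial δ b * p).support ⊆ p.support.image (δ + ·) := by
  intro α hα
  rw [mem_support_iff, coeff_monomial_mul'] at hα
  split_ifs at hα with hδ
  · exact mem_image.2 ⟨α - δ, mem_support_iff.2 (right_ne_zero_of_mul hα),
      add_tsub_cancel_of_le hδ⟩
  · exact absurd rfl hα

def scaleVars (c : σ → R) : MvPolynomial σ R →ₐ[R] MvPolynomial σ R :=
  aeval fun i => C (c i) * X i

variable [Fintype σ]

lemma scaleVars_monomial (c : σ → R) (β : σ →₀ ℕ) (b : R) :
    scaleVars c (monomial β b) = monomial β ((∏ i, c i ^ β i) * b) := by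
  rw [scaleVars, aeval_monomial]
  have hC : (β.prod fun i k => C (c i) ^ k) = (C (∏ i, c i ^ β i) : MvPolynomial σ R) := by
    rw [Finsupp.prod_fintype _ _ fun _ => pow_zero _, map_prod]
    simp only [map_pow]
  simp only [mul_pow, Finsupp.prod_mul, hC, algebraMap_eq, monomial_eq, map_mul]
  ring

lemma coeff_scaleVars (c : σ → R) (p : MvPolynomial σ R) (α : σ →₀ ℕ) :
    (scaleVars c p).coeff α = (∏ i, c i ^ α i) * p.coeff α := by
  induction p using MvPolynomial.induction_on' with
  | monomial β b =>
    classical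
    rw [scaleVars_monomial, coeff_monomial, coeff_monomial]
    split_ifs with h
    · rw [h]
    · rw [mul_zero]
  | add p q hp hq => rw [map_add, coeff_add, coeff_add, hp, hq, mul_add]

lemma support_scaleVars_subset (c : σ → R) (p : MvPolynomial σ R) :
    (scaleVars c p).support ⊆ p.support := fun α hα => by
  rw [mem_support_iff, coeff_scaleVars] at hα
  exact mem_support_iff.2 (right_ne_zero_of_mul hα)

lemma scaleVars_scaleVars (c c' : σ → R) (p : MvPolynomial σ R) :
    scaleVars c (scaleVars c' p) = scaleVars (c * c') p := by
  ext α
  simp only [coeff_scaleVars, Pi.mul_apply, mul_pow, prod_mul_distrib]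
  ring

lemma scaleVars_one (p : MvPolynomial σ R) : scaleVars (1 : σ → R) p = p := by
  ext α
  simp [coeff_scaleVars]

variable {K : Type*} [Field K] {c : σ → K}

lemma support_scaleVars (hc : ∀ i, c i ≠ 0) (p : MvPolynomial σ K) :
    (scaleVars c p).support = p.support := by
  ext α
  simp [coeff_scaleVars, prod_ne_zero_iff, hc]

lemma scaleVars_surjective (hc : ∀ i, c i ≠ 0) : Function.Surjective (scaleVars c) := fun p =>
  ⟨scaleVars c⁻¹ p, by
    rw [scaleVars_scaleVars, show c * c⁻¹ = 1 from _root_.funext fun i => mul_inv_cancel₀ (hc i),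
      scaleVars_one]⟩

end MvPolynomial

namespace MonomialOrder

section GroebnerBasis

variable {σ R ι : Type*} [CommSemiring R]

structure IsGroebnerBasis (m : MonomialOrder σ) (J : Ideal (MvPolynomial σ R))
    (g : ι → MvPolynomial σ R) : Prop where
  mem : ∀ i, g i ∈ J
  ne_zero : ∀ i, g i ≠ 0
  exists_degree_le : ∀ r ∈ J, r ≠ 0 → ∃ i, m.degree (g i) ≤ m.degree r

theorem exists_isGroebnerBasis [Finite σ] (m : MonomialOrder σ) (J : Ideal (MvPolynomial σ R)) :
    ∃ (k : ℕ) (g : Fin k → MvPolynomial σ R), m.IsGroebnerBasis J g := by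
  obtain ⟨F, hFJ, hF⟩ :=
    exists_finset_le_of_wellQuasiOrderedLE (m.degree '' {p | p ∈ J ∧ p ≠ 0})
  choose p hp using fun b : F => hFJ b.2
  refine ⟨F.card, p ∘ F.equivFin.symm,
    ⟨fun i => (hp _).1.1, fun i => (hp _).1.2, fun r hr hr0 => ?_⟩⟩
  obtain ⟨b, hbF, hb⟩ := hF _ ⟨r, ⟨hr, hr0⟩, rfl⟩
  exact ⟨F.equivFin ⟨b, hbF⟩, by simpa [(hp _).2] using hb⟩

end GroebnerBasis

section SubLTerm

variable {σ R : Type*} [CommRing R] {m : MonomialOrder σ}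

lemma mem_support_subLTerm_iff {p : MvPolynomial σ R} {α : σ →₀ ℕ} :
    α ∈ (m.subLTerm p).support ↔ α ∈ p.support ∧ α ≠ m.degree p := by
  classical
  by_cases h : α = m.degree p
  · simp [h, subLTerm, leadingCoeff]
  · simp [h, subLTerm, coeff_monomial, Ne.symm h]

lemma lt_degree_of_mem_support_subLTerm {p : MvPolynomial σ R} {α : σ →₀ ℕ}
    (hα : α ∈ (m.subLTerm p).support) : α ≺[m] m.degree p :=
  have ⟨hp, hne⟩ := mem_support_subLTerm_iff.1 hα
  lt_of_le_of_ne (m.le_degree hp) (m.toSyn.injective.ne hne)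

end SubLTerm

section ScaleVars

variable {σ K : Type*} [Fintype σ] [Field K] {m : MonomialOrder σ} {c : σ → K}

lemma degree_scaleVars (hc : ∀ i, c i ≠ 0) (p : MvPolynomial σ K) :
    m.degree (scaleVars c p) = m.degree p := by
  rw [degree, degree, support_scaleVars hc]

lemma leadingCoeff_scaleVars (hc : ∀ i, c i ≠ 0) (p : MvPolynomial σ K) :
    m.leadingCoeff (scaleVars c p) = (∏ i, c i ^ m.degree p i) * m.leadingCoeff p := by
  rw [leadingCoeff, degree_scaleVars hc, coeff_scaleVars, leadingCoeff]

lemma subLTerm_scaleVars (hc : ∀ i, c i ≠ 0) (p : MvPolynomial σ K) :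
    m.subLTerm (scaleVars c p) = scaleVars c (m.subLTerm p) := by
  rw [subLTerm, subLTerm, map_sub, scaleVars_monomial, degree_scaleVars hc,
    leadingCoeff_scaleVars hc]

lemma IsGroebnerBasis.map_scaleVars {ι : Type*} {I : Ideal (MvPolynomial σ K)}
    {g : ι → MvPolynomial σ K} (hg : m.IsGroebnerBasis I g) (hc : ∀ i, c i ≠ 0) :
    m.IsGroebnerBasis (I.map (scaleVars c)) (scaleVars c ∘ g) where
  mem i := Ideal.mem_map_of_mem _ (hg.mem i)
  ne_zero i := by
    rw [Function.comp_apply, ← support_nonempty, support_scaleVars hc, support_nonempty]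
    exact hg.ne_zero i
  exists_degree_le r hr hr₀ := by
    obtain ⟨p, hp, rfl⟩ := (Ideal.mem_map_iff_of_surjective _ (scaleVars_surjective hc)).1 hr
    obtain ⟨i, hi⟩ := hg.exists_degree_le p hp (by rintro rfl; exact hr₀ (map_zero _))
    exact ⟨i, by simpa [degree_scaleVars hc] using hi⟩

end ScaleVars

end MonomialOrder

section L1

variable {d : ℕ}

lemma l1_eq_sum_of_support_subset {p : MvPolynomial (Fin d) ℂ} {S : Finset (Fin d →₀ ℕ)}
    (h : p.support ⊆ S) : l1 p = ∑ α ∈ S, ‖p.coeff α‖ :=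
  Finset.sum_subset h fun α _ hα => by simp [notMem_support_iff.mp hα]

lemma l1_add_le (p q : MvPolynomial (Fin d) ℂ) : l1 (p + q) ≤ l1 p + l1 q := by
  classical
  rw [l1_eq_sum_of_support_subset support_add,
    l1_eq_sum_of_support_subset (subset_union_left (s₂ := q.support)),
    l1_eq_sum_of_support_subset (subset_union_right (s₁ := p.support)), ← sum_add_distrib]
  exact sum_le_sum fun α _ => by rw [coeff_add]; exact norm_add_le _ _

@[simp] lemma l1_zero : l1 (0 : MvPolynomial (Fin d) ℂ) = 0 := by simp [l1]

@[simp] lemma l1_neg (p : MvPolynomial (Fin d) ℂ) : l1 (-p) = l1 p := by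
  simp [l1, support_neg]

lemma l1_sub_le (p q : MvPolynomial (Fin d) ℂ) : l1 (p - q) ≤ l1 p + l1 q := by
  simpa [sub_eq_add_neg] using l1_add_le p (-q)

lemma l1_sub_monomial_coeff_add (p : MvPolynomial (Fin d) ℂ) (μ : Fin d →₀ ℕ) :
    l1 p = l1 (p - monomial μ (p.coeff μ)) + ‖p.coeff μ‖ := by
  classical
  set S := insert μ p.support
  have hsub : (p - monomial μ (p.coeff μ)).support ⊆ S :=
    (support_sub _ _ _).trans (union_subset (subset_insert _ _)
      (support_monomial_subset.trans (by simp [S])))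
  have hμ : μ ∈ S := mem_insert_self _ _
  rw [l1_eq_sum_of_support_subset (subset_insert μ p.support), l1_eq_sum_of_support_subset hsub,
    ← sum_erase_add _ _ hμ, ← sum_erase_add _ _ hμ]
  have hrest : ∀ α ∈ S.erase μ, (p - monomial μ (p.coeff μ)).coeff α = p.coeff α := fun α hα => by
    simp [coeff_monomial, Ne.symm (ne_of_mem_erase hα)]
  rw [sum_congr rfl fun α hα => congrArg norm (hrest α hα)]
  simp

lemma l1_monomial_mul (δ : Fin d →₀ ℕ) (b : ℂ) (p : MvPolynomial (Fin d) ℂ) :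
    l1 (monomial δ b * p) = ‖b‖ * l1 p := by
  classical
  rw [l1_eq_sum_of_support_subset (support_monomial_mul_subset δ b p),
    sum_image fun _ _ _ _ h => add_left_cancel h, l1, mul_sum]
  simp [coeff_monomial_mul]

lemma l1_eq_l1_subLTerm_add (m : MonomialOrder (Fin d)) (p : MvPolynomial (Fin d) ℂ) :
    l1 p = l1 (m.subLTerm p) + ‖m.leadingCoeff p‖ :=
  l1_sub_monomial_coeff_add p (m.degree p)

lemma exists_l1_reduction (m : MonomialOrder (Fin d)) {θ : ℝ} {g r : MvPolynomial (Fin d) ℂ}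
    (hg : g ≠ 0) (hdom : l1 (m.subLTerm g) ≤ θ * ‖m.leadingCoeff g‖)
    (hgr : m.degree g ≤ m.degree r) :
    ∃ a : MvPolynomial (Fin d) ℂ, l1 (a * g) ≤ (1 + θ) * ‖m.leadingCoeff r‖ ∧
      l1 (r - a * g) ≤ l1 r - (1 - θ) * ‖m.leadingCoeff r‖ ∧
      ∀ α ∈ (r - a * g).support, α ≺[m] m.degree r := by
  classical
  set δ := m.degree r - m.degree g
  set e := m.leadingCoeff r / m.leadingCoeff g
  have hlc : m.leadingCoeff g ≠ 0 := m.leadingCoeff_ne_zero_iff.2 hg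
  have he : ‖e‖ * ‖m.leadingCoeff g‖ = ‖m.leadingCoeff r‖ := by
    rw [← norm_mul, div_mul_cancel₀ _ hlc]
  have hsplit : r - monomial δ e * g = m.subLTerm r - monomial δ e * m.subLTerm g := by
    have hlead : monomial δ e * monomial (m.degree g) (m.leadingCoeff g) =
        monomial (m.degree r) (m.leadingCoeff r) := by
      rw [monomial_mul, tsub_add_cancel_of_le hgr, div_mul_cancel₀ _ hlc]
    rw [subLTerm, subLTerm, mul_sub, hlead]
    ring
  have htail : ‖e‖ * l1 (m.subLTerm g) ≤ θ * ‖m.leadingCoeff r‖ :=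
    calc ‖e‖ * l1 (m.subLTerm g) ≤ ‖e‖ * (θ * ‖m.leadingCoeff g‖) :=
          mul_le_mul_of_nonneg_left hdom (norm_nonneg e)
      _ = θ * ‖m.leadingCoeff r‖ := by rw [← he]; ring
  refine ⟨monomial δ e, ?_, ?_, fun α hα => ?_⟩
  · rw [l1_monomial_mul, l1_eq_l1_subLTerm_add m g]
    linarith
  · rw [hsplit]
    have := l1_sub_le (m.subLTerm r) (monomial δ e * m.subLTerm g)
    rw [l1_monomial_mul] at this
    linarith [l1_eq_l1_subLTerm_add m r]
  · rw [hsplit] at hα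
    rcases mem_union.1 (support_sub _ _ _ hα) with h | h
    · exact lt_degree_of_mem_support_subLTerm h
    · obtain ⟨β, hβ, rfl⟩ := mem_image.1 (support_monomial_mul_subset δ e _ h)
      calc m.toSyn (δ + β) = m.toSyn δ + m.toSyn β := map_add _ _ _
        _ < m.toSyn δ + m.toSyn (m.degree g) :=
          (add_lt_add_iff_left _).2 (lt_degree_of_mem_support_subLTerm hβ)
        _ = m.toSyn (m.degree r) := by rw [← map_add, tsub_add_cancel_of_le hgr]

theorem MonomialOrder.IsGroebnerBasis.exists_sum_l1_le {m : MonomialOrder (Fin d)}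
    {J : Ideal (MvPolynomial (Fin d) ℂ)} {ι : Type*} [Fintype ι] {g : ι → MvPolynomial (Fin d) ℂ}
    (hg : m.IsGroebnerBasis J g) {θ : ℝ} (hθ₀ : 0 ≤ θ) (hθ₁ : θ < 1)
    (hdom : ∀ i, l1 (m.subLTerm (g i)) ≤ θ * ‖m.leadingCoeff (g i)‖)
    {r : MvPolynomial (Fin d) ℂ} (hr : r ∈ J) :
    ∃ a : ι → MvPolynomial (Fin d) ℂ, r = ∑ i, a i * g i ∧
      ∑ i, l1 (a i * g i) ≤ (1 + θ) / (1 - θ) * l1 r := by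
  classical
  induction hμ : m.toSyn (m.degree r) using WellFoundedLT.induction generalizing r with
  | _ μ ih =>
  rcases eq_or_ne r 0 with rfl | hr₀
  · exact ⟨0, by simp, by simp⟩
  obtain ⟨i, hi⟩ := hg.exists_degree_le r hr hr₀
  obtain ⟨b, hb_cost, hb_l1, hb_lt⟩ := exists_l1_reduction m (hg.ne_zero i) (hdom i) hi
  obtain ⟨a, ha_sum, ha_cost⟩ : ∃ a : ι → MvPolynomial (Fin d) ℂ,
      r - b * g i = ∑ j, a j * g j ∧
        ∑ j, l1 (a j * g j) ≤ (1 + θ) / (1 - θ) * l1 (r - b * g i) := by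
    rcases eq_or_ne (r - b * g i) 0 with h₀ | h₀
    · exact ⟨0, by simp [h₀], by simp [h₀]⟩
    · exact ih _ (hμ ▸ hb_lt _ (m.degree_mem_support h₀))
        (J.sub_mem hr (J.mul_mem_left _ (hg.mem i))) rfl
  have hC : (1 + θ) / (1 - θ) * (1 - θ) = 1 + θ := div_mul_cancel₀ _ (by linarith)
  have hC₀ : 0 ≤ (1 + θ) / (1 - θ) := div_nonneg (by linarith) (by linarith)
  set e : ι → MvPolynomial (Fin d) ℂ := Pi.single i b
  have he : ∀ j ≠ i, e j = 0 := fun j hj => by simp [e, hj]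
  have he_sum : ∑ j, e j * g j = b * g i :=
    (Fintype.sum_eq_single i fun j hj => by rw [he j hj, zero_mul]).trans (by simp [e])
  have he_l1 : ∑ j, l1 (e j * g j) = l1 (b * g i) :=
    (Fintype.sum_eq_single i fun j hj => by rw [he j hj, zero_mul, l1_zero]).trans (by simp [e])
  refine ⟨a + e, ?_, ?_⟩
  · simp only [Pi.add_apply, add_mul, sum_add_distrib, ← ha_sum, he_sum, sub_add_cancel]
  · calc ∑ j, l1 ((a + e) j * g j)
        ≤ ∑ j, (l1 (a j * g j) + l1 (e j * g j)) :=
          sum_le_sum fun j _ => by rw [Pi.add_apply, add_mul]; exact l1_add_le _ _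
      _ = ∑ j, l1 (a j * g j) + l1 (b * g i) := by rw [sum_add_distrib, he_l1]
      _ ≤ (1 + θ) / (1 - θ) * (l1 r - (1 - θ) * ‖m.leadingCoeff r‖)
            + (1 + θ) * ‖m.leadingCoeff r‖ :=
          add_le_add (ha_cost.trans (mul_le_mul_of_nonneg_left hb_l1 hC₀)) hb_cost
      _ = (1 + θ) / (1 - θ) * l1 r := by linear_combination (-‖m.leadingCoeff r‖) * hC

end L1

section LexScaling

variable {d : ℕ}

def lexWeight (D : ℕ) (α : Fin d →₀ ℕ) : ℕ := ∑ i, α i * (D + 1) ^ (i.rev : ℕ)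

lemma sum_Ioi_mul_pow_rev_lt (D : ℕ) (j : Fin d) :
    ∑ i ∈ Ioi j, D * (D + 1) ^ (i.rev : ℕ) < (D + 1) ^ (j.rev : ℕ) := by
  have hrev : ∑ i ∈ Ioi j, D * (D + 1) ^ (i.rev : ℕ) = ∑ k ∈ range j.rev, D * (D + 1) ^ k := by
    rw [← Fin.rev_rev j, Fin.rev_rev j.rev, ← Fin.finsetImage_rev_Iio,
      sum_image fun _ _ _ _ => Fin.rev_injective.eq_iff.1, ← Nat.Iio_eq_range,
      ← Fin.map_valEmbedding_Iio, sum_map]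
    simp
  rw [hrev, ← mul_sum, ← geom_sum_mul_add D, mul_comm]
  exact Nat.lt_succ_self _

lemma lexWeight_lt_of_toLex_lt {D : ℕ} {α β : Fin d →₀ ℕ} (hα : ∀ j, α j ≤ D)
    (h : toLex α < toLex β) : lexWeight D α < lexWeight D β := by
  classical
  obtain ⟨j, hpre, hj⟩ := Finsupp.lex_def.1 h
  simp only [ofLex_toLex] at hpre hj
  have hsplit : ∀ γ : Fin d →₀ ℕ, lexWeight D γ = ∑ i ∈ Iio j, γ i * (D + 1) ^ (i.rev : ℕ)
      + (γ j * (D + 1) ^ (j.rev : ℕ) + ∑ i ∈ Ioi j, γ i * (D + 1) ^ (i.rev : ℕ)) := by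
    intro γ
    have hcompl : (Iio j)ᶜ = insert j (Ioi j) := by
      ext i; simp [le_iff_eq_or_lt]
    rw [lexWeight, ← sum_add_sum_compl (Iio j), hcompl, sum_insert (by simp)]
  have htail : ∑ i ∈ Ioi j, α i * (D + 1) ^ (i.rev : ℕ) < (D + 1) ^ (j.rev : ℕ) :=
    (sum_le_sum fun i _ => Nat.mul_le_mul_right _ (hα i)).trans_lt (sum_Ioi_mul_pow_rev_lt D j)
  have hlead : (α j + 1) * (D + 1) ^ (j.rev : ℕ) ≤ β j * (D + 1) ^ (j.rev : ℕ) :=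
    Nat.mul_le_mul_right _ hj
  rw [hsplit α, hsplit β, sum_congr rfl fun i hi => by rw [hpre i (mem_Iio.1 hi)]]
  linarith [Nat.zero_le (∑ i ∈ Ioi j, β i * (D + 1) ^ (i.rev : ℕ))]

def lexScaling (D : ℕ) (t : ℝ) (i : Fin d) : ℝ := t ^ (D + 1) ^ (i.rev : ℕ)

lemma prod_lexScaling_pow (D : ℕ) (t : ℝ) (α : Fin d →₀ ℕ) :
    ∏ i, lexScaling D t i ^ α i = t ^ lexWeight D α := by
  simp only [lexScaling, lexWeight, ← pow_mul, prod_pow_eq_pow_sum, mul_comm]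

lemma norm_coeff_scaleVars_lexScaling {D : ℕ} {t : ℝ} (ht : 0 ≤ t) (p : MvPolynomial (Fin d) ℂ)
    (α : Fin d →₀ ℕ) :
    ‖(scaleVars (fun i => (lexScaling D t i : ℂ)) p).coeff α‖ =
      t ^ lexWeight D α * ‖p.coeff α‖ := by
  rw [coeff_scaleVars, norm_mul]
  norm_cast
  rw [prod_lexScaling_pow, Real.norm_of_nonneg (pow_nonneg ht _)]

lemma l1_scaleVars_lexScaling_le {D n : ℕ} {t : ℝ} (ht : 1 ≤ t) {p : MvPolynomial (Fin d) ℂ}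
    (hp : ∀ α ∈ p.support, lexWeight D α < n) :
    t * l1 (scaleVars (fun i => (lexScaling D t i : ℂ)) p) ≤ t ^ n * l1 p := by
  rw [l1_eq_sum_of_support_subset (support_scaleVars_subset _ p), l1, mul_sum, mul_sum]
  refine sum_le_sum fun α hα => ?_
  rw [norm_coeff_scaleVars_lexScaling (by linarith), ← mul_assoc, ← pow_succ']
  exact mul_le_mul_of_nonneg_right (pow_le_pow_right₀ ht (hp α hα)) (norm_nonneg _)

theorem l1_subLTerm_scaleVars_lexScaling_le {D : ℕ} {t θ : ℝ} (ht : 1 ≤ t)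
    {p : MvPolynomial (Fin d) ℂ} (hD : ∀ α ∈ p.support, ∀ j, α j ≤ D)
    (hp : l1 (lex.subLTerm p) ≤ t * (θ * ‖lex.leadingCoeff p‖)) :
    l1 (lex.subLTerm (scaleVars (fun i => (lexScaling D t i : ℂ)) p)) ≤
      θ * ‖lex.leadingCoeff (scaleVars (fun i => (lexScaling D t i : ℂ)) p)‖ := by
  have hc : ∀ i : Fin d, (lexScaling D t i : ℂ) ≠ 0 := fun i =>
    Complex.ofReal_ne_zero.2 (pow_pos (by linarith) _).ne'
  have hlc : ‖lex.leadingCoeff (scaleVars (fun i => (lexScaling D t i : ℂ)) p)‖ =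
      t ^ lexWeight D (lex.degree p) * ‖lex.leadingCoeff p‖ :=
    (congrArg norm (by rw [leadingCoeff, degree_scaleVars hc])).trans
      (norm_coeff_scaleVars_lexScaling (by linarith) p _)
  have htail := l1_scaleVars_lexScaling_le ht (p := lex.subLTerm p) fun α hα =>
    lexWeight_lt_of_toLex_lt (hD α (mem_support_subLTerm_iff.1 hα).1)
      (lt_degree_of_mem_support_subLTerm hα)
  rw [subLTerm_scaleVars hc, hlc]
  refine le_of_mul_le_mul_left ?_ (by linarith : 0 < t)
  calc _ ≤ _ := htail
    _ ≤ _ := mul_le_mul_of_nonneg_left hp (pow_nonneg (by linarith) _)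
    _ = _ := by ring

end LexScaling

/-- every ideal of `ℂ[z_1,…,z_d]` becomes, after a suitable positive
rescaling of the variables, an ideal with the stable division property for the ℓ¹ norm. -/
theorem stmt6 (d : ℕ) (I : Ideal (MvPolynomial (Fin d) ℂ)) :
    ∃ lam : Fin d → ℝ, (∀ i, 0 < lam i) ∧
    ∃ J : Ideal (MvPolynomial (Fin d) ℂ),
      (J : Set (MvPolynomial (Fin d) ℂ)) =
        (fun p => aeval (fun i : Fin d => C ((lam i : ℝ) : ℂ) * X i) p) ''
          (I : Set (MvPolynomial (Fin d) ℂ)) ∧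
      ∃ (k : ℕ) (g : Fin k → MvPolynomial (Fin d) ℂ) (Cst : ℝ),
        Ideal.span (Set.range g) = J ∧
        ∀ h ∈ J, ∃ a : Fin k → MvPolynomial (Fin d) ℂ,
          h = ∑ i, a i * g i ∧ ∑ i, l1 (a i * g i) ≤ Cst * l1 h := by
  obtain ⟨k, g, hg⟩ := lex.exists_isGroebnerBasis I
  obtain ⟨D, hD⟩ : ∃ D : ℕ, ∀ i, ∀ α ∈ (g i).support, ∀ j, α j ≤ D :=
    (Filter.eventually_all.2 fun i => (Filter.eventually_all_finset _).2 fun α _ =>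
      Filter.eventually_all.2 fun j => Filter.eventually_ge_atTop (α j)).exists
  obtain ⟨t, ht, hgt⟩ : ∃ t : ℝ, 1 ≤ t ∧
      ∀ i, l1 (lex.subLTerm (g i)) ≤ t * (1 / 2 * ‖lex.leadingCoeff (g i)‖) :=
    ((Filter.eventually_ge_atTop 1).and (Filter.eventually_all.2 fun i =>
      (Filter.tendsto_id.atTop_mul_const (by
        simpa [lex.leadingCoeff_ne_zero_iff] using hg.ne_zero i)).eventually_ge_atTop _)).exists
  set c : Fin d → ℂ := fun i => (lexScaling D t i : ℂ)
  have hc : ∀ i, c i ≠ 0 := fun i => Complex.ofReal_ne_zero.2 (pow_pos (by linarith) _).ne'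
  have hJ := hg.map_scaleVars hc
  have hrepr : ∀ r ∈ I.map (scaleVars c), ∃ a : Fin k → MvPolynomial (Fin d) ℂ,
      r = ∑ i, a i * scaleVars c (g i) ∧ ∑ i, l1 (a i * scaleVars c (g i)) ≤ 3 * l1 r := by
    intro r hr
    obtain ⟨a, ha, hcost⟩ := hJ.exists_sum_l1_le (θ := 1 / 2) (by norm_num) (by norm_num)
      (fun i => l1_subLTerm_scaleVars_lexScaling_le ht (hD i) (hgt i)) hr
    exact ⟨a, ha, hcost.trans_eq (by norm_num)⟩
  refine ⟨lexScaling D t, fun i => pow_pos (by linarith) _, I.map (scaleVars c),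
    Set.ext fun r => Ideal.mem_map_iff_of_surjective _ (scaleVars_surjective hc),
    k, scaleVars c ∘ g, 3, le_antisymm (Ideal.span_le.2 (Set.range_subset_iff.2 hJ.mem)) ?_, hrepr⟩
  intro r hr
  obtain ⟨a, rfl, -⟩ := hrepr r hr
  exact Ideal.sum_mem _ fun i _ => Ideal.mul_mem_left _ _ (Ideal.subset_span ⟨i, rfl⟩)

end
end

section
/- Let M be a graded submodule of H²_d ⊗ ℂ^r generated by homogeneous vector-valued polynomials f_1,…,f_k of degree m forming a stable generating set with constant C, and let P_n denote the orthogonal projection onto M_n^⊥ ⊆ H_n ⊗ ℂ^r, E_n the projection onto H_n ⊗ ℂ^r. Then there is a constant C' such that for all n ≥ m and all j, ‖P_n Z_j* (E_{n+1} − P_{n+1}E_{n+1})‖ ≤ C'(n+1)^{−1/2}. -/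
/-!
In the Fock space, where `‖p‖² = ∑ |p_α|² α!` and `∂ⱼ` is adjoint to multiplication by `zⱼ`, the
multi-index Vandermonde identity gives `‖f b‖² = ∑_β ‖(∂^β f)^*(∂) b‖² / β!`. Replacing `f` by
`∂ⱼ f` shifts `β` to `β + eⱼ` at the cost of a factor `βⱼ + 1 ≤ m`, so `‖(∂ⱼ f) b‖² ≤ m ‖f b‖²` for
`f` homogeneous of degree `m`. On homogeneous polynomials of degree `N` the Drury–Arveson norm is
the Fock norm divided by `N!`, which turns this into the Guo–Wang inequality
`‖b ∂ⱼ f‖² ≤ m (n + 1) ‖b f‖²` when `b f` has degree `n + 1`.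

Stability, followed by taking homogeneous components, writes `h ∈ M_{n+1}` as `∑ bᵢ fᵢ` with `bᵢ`
homogeneous and `∑ ‖bᵢ fᵢ‖ ≤ C ‖h‖`. By Leibniz,
`(n + 1)⁻¹ ∂ⱼ h = (n + 1)⁻¹ ∑ (∂ⱼ bᵢ) fᵢ + (n + 1)⁻¹ ∑ bᵢ ∂ⱼ fᵢ`, where the first term lies in `M_n`;
so the part of `Zⱼ^* h` orthogonal to `M_n` is no larger than the second term, whose squared norm is
at most `k m C² ‖h‖² / (n + 1)` by Cauchy–Schwarz and the Guo–Wang inequality.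
-/

open MvPolynomial Finset

noncomputable section

open ComplexConjugate
open scoped Nat

namespace DruryArveson

section Polynomial

variable {σ R : Type*} [CommSemiring R]

lemma coeff_mul_eq_sum_support (f b : MvPolynomial σ R) (s : σ →₀ ℕ) :
    (f * b).coeff s = ∑ γ ∈ f.support, if γ ≤ s then f.coeff γ * b.coeff (s - γ) else 0 := by
  conv_lhs => rw [f.as_sum, sum_mul]
  rw [coeff_sum]
  exact sum_congr rfl fun γ _ => coeff_monomial_mul' s γ _ b

lemma apply_le_of_mem_support {f : MvPolynomial σ R} {m : ℕ} (hf : f.IsHomogeneous m)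
    {γ : σ →₀ ℕ} (hγ : γ ∈ f.support) (j : σ) : γ j ≤ m := by
  rw [hf.degree_eq_sum_deg_support hγ, ← Finsupp.degree_apply]
  exact Finsupp.le_degree j γ

lemma homogeneousComponent_mul_of_isHomogeneous {F : MvPolynomial σ R} {m : ℕ}
    (hF : F.IsHomogeneous m) (a : MvPolynomial σ R) (ℓ : ℕ) :
    homogeneousComponent (ℓ + m) (a * F) = homogeneousComponent ℓ a * F := by
  conv_lhs => rw [← sum_homogeneousComponent a, sum_mul, map_sum]
  simp_rw [homogeneousComponent_of_mem ((homogeneousComponent_isHomogeneous _ a).mul hF),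
    add_left_inj]
  rw [sum_ite_eq]
  split_ifs with h
  · rfl
  · rw [homogeneousComponent_eq_zero _ _ (by simpa using h), zero_mul]

lemma sum_conj_coeff_mul_mul (f b : MvPolynomial σ ℂ)
    {E : Finset (σ →₀ ℕ)} (hE : ∀ γ ∈ f.support, ∀ α ∈ b.support, γ + α ∈ E) (g : (σ →₀ ℕ) → ℂ) :
    ∑ ε ∈ E, conj ((f * b).coeff ε) * g ε
      = ∑ γ ∈ f.support, ∑ α ∈ b.support, conj (f.coeff γ * b.coeff α) * g (γ + α) := by
  classical
  have hcoeff : ∀ ε, (f * b).coeff ε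
      = ∑ γ ∈ f.support, ∑ α ∈ b.support, if γ + α = ε then f.coeff γ * b.coeff α else 0 := by
    intro ε
    conv_lhs => rw [f.as_sum, b.as_sum, sum_mul_sum]
    simp only [monomial_mul, coeff_sum, coeff_monomial]
  simp only [hcoeff, map_sum, apply_ite conj, map_zero, sum_mul, ite_mul, zero_mul]
  rw [sum_comm]
  refine sum_congr rfl fun γ hγ => ?_
  rw [sum_comm]
  exact sum_congr rfl fun α hα => by rw [sum_ite_eq, if_pos (hE γ hγ α hα)]

lemma sum_conj_coeff_add_mul (b : MvPolynomial σ ℂ) {S : Finset (σ →₀ ℕ)} {x : σ →₀ ℕ}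
    (hS : ∀ α ∈ b.support, x ≤ α → α - x ∈ S) (G : (σ →₀ ℕ) → ℂ) :
    ∑ δ ∈ S, conj (b.coeff (δ + x)) * G δ
      = ∑ α ∈ b.support, if x ≤ α then conj (b.coeff α) * G (α - x) else 0 := by
  refine sum_bij_ne_zero (fun δ _ _ => δ + x) (fun δ _ hδ => ?_)
    (fun _ _ _ _ _ _ h => add_right_cancel h) (fun α hα hα' => ?_) (fun δ _ _ => ?_)
  · exact mem_support_iff.2 fun h => hδ (by simp [h])
  · have hx : x ≤ α := by by_contra hx; simp [hx] at hα'
    refine ⟨α - x, hS α hα hx, ?_, tsub_add_cancel_of_le hx⟩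
    simpa [tsub_add_cancel_of_le hx, hx] using hα'
  · simp

end Polynomial

section MultiIndex

variable {σ : Type*} [Fintype σ]

def multiFactorial (α : σ →₀ ℕ) : ℕ := ∏ i, (α i)!

lemma multiFactorial_pos (α : σ →₀ ℕ) : 0 < multiFactorial α :=
  prod_pos fun _ _ => Nat.factorial_pos _

lemma multiFactorial_add_single [DecidableEq σ] (γ : σ →₀ ℕ) (j : σ) :
    multiFactorial (γ + Finsupp.single j 1) = (γ j + 1) * multiFactorial γ := by
  unfold multiFactorial
  rw [← mul_prod_erase _ _ (mem_univ j),
    ← mul_prod_erase _ (fun i => (γ i)!) (mem_univ j), ← mul_assoc]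
  congr 1
  · simp [Nat.factorial_succ]
  · refine prod_congr rfl fun i hi => ?_
    simp [(ne_of_mem_erase hi).symm]

def factorialQuotient (g g' a w : ℕ) : ℝ :=
  (g ! * g' ! * a ! * (g + a - g')! : ℝ) / (w ! * (g - w)! * (g' - w)! * (a - (g' - w))!)

lemma ite_factorialQuotient_eq_choose_mul {g g' a w : ℕ} (hw : w ≤ g) :
    (if g' - w ≤ a then factorialQuotient g g' a w else 0)
      = ((g.choose w * a.choose (g' - w) * (g' ! * (g + a - g')!) : ℕ) : ℝ) := by
  split_ifs with hga
  · rw [factorialQuotient, div_eq_iff (by positivity),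
      ← Nat.choose_mul_factorial_mul_factorial hw, ← Nat.choose_mul_factorial_mul_factorial hga]
    push_cast
    ring
  · simp [Nat.choose_eq_zero_of_lt (not_le.1 hga)]

/-- Vandermonde's identity `∑_w C(g,w) C(a,g'-w) = C(g+a,g')`, multiplied by `g'! (g+a-g')!`. -/
lemma sum_ite_factorialQuotient_eq (g g' a : ℕ) :
    ∑ w ∈ range (min g g' + 1), (if g' - w ≤ a then factorialQuotient g g' a w else 0)
      = if g' ≤ g + a then ((g + a)! : ℝ) else 0 := by
  rw [sum_congr rfl fun w hw => ite_factorialQuotient_eq_choose_mul (by simp at hw; omega),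
    ← Nat.cast_sum, ← sum_mul]
  have vandermonde : ∑ w ∈ range (min g g' + 1), g.choose w * a.choose (g' - w)
      = (g + a).choose g' := by
    rw [Nat.add_choose_eq, Nat.sum_antidiagonal_eq_sum_range_succ_mk]
    refine sum_subset (range_subset_range.2 (by omega)) fun w hw hw' => ?_
    simp only [mem_range] at hw hw'
    rw [Nat.choose_eq_zero_of_lt (show g < w by omega), zero_mul]
  rw [vandermonde]
  split_ifs with h
  · rw [← Nat.choose_mul_factorial_mul_factorial h]
    push_cast
    ring
  · simp [Nat.choose_eq_zero_of_lt (not_le.1 h)]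

lemma sum_Iic_eq_sum_piFinset [DecidableEq σ] {M : Type*} [AddCommMonoid M] (μ : σ →₀ ℕ)
    (F : (σ →₀ ℕ) → M) :
    ∑ β ∈ Iic μ, F β
      = ∑ x ∈ Fintype.piFinset fun i => range (μ i + 1), F (Finsupp.equivFunOnFinite.symm x) := by
  refine sum_nbij' (fun β => ⇑β) Finsupp.equivFunOnFinite.symm (fun β hβ => ?_) (fun x hx => ?_)
    (fun β _ => Finsupp.equivFunOnFinite.symm_apply_apply β) (fun x _ => rfl) (fun β _ => ?_)
  · simpa [Nat.lt_succ_iff] using fun i => Finsupp.le_def.1 (mem_Iic.1 hβ) i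
  · simp only [Fintype.mem_piFinset, mem_range, Nat.lt_succ_iff] at hx
    exact mem_Iic.2 (Finsupp.le_def.2 hx)
  · rw [Finsupp.equivFunOnFinite_symm_coe]

def vandermondeWeight (γ γ' α β : σ →₀ ℕ) : ℝ :=
  (multiFactorial γ * multiFactorial γ' * multiFactorial α * multiFactorial (γ + α - γ') : ℝ) /
    (multiFactorial β * multiFactorial (γ - β) * multiFactorial (γ' - β) *
      multiFactorial (α - (γ' - β)))

lemma vandermondeWeight_eq_prod (γ γ' α β : σ →₀ ℕ) :
    vandermondeWeight γ γ' α β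
      = ∏ i, factorialQuotient (γ i) (γ' i) (α i) (β i) := by
  simp only [vandermondeWeight, factorialQuotient, multiFactorial, ← prod_mul_distrib,
    prod_div_distrib, Nat.cast_prod, Finsupp.coe_tsub, Finsupp.coe_add, Pi.sub_apply, Pi.add_apply]

lemma factorial_add_eq_sum_vandermondeWeight [DecidableEq σ] (γ γ' α : σ →₀ ℕ) :
    (if γ' ≤ γ + α then (multiFactorial (γ + α) : ℝ) else 0)
      = ∑ β ∈ Iic (γ ⊓ γ'), if γ' - β ≤ α then vandermondeWeight γ γ' α β else 0 := by
  have hcoord : ∀ β : σ →₀ ℕ, γ' - β ≤ α ↔ ∀ i, γ' i - β i ≤ α i := fun β => by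
    simp [Finsupp.le_def]
  have hlhs : (if γ' ≤ γ + α then (multiFactorial (γ + α) : ℝ) else 0)
      = ∏ i, if γ' i ≤ γ i + α i then ((γ i + α i)! : ℝ) else 0 := by
    simp [Fintype.prod_ite_zero, Finsupp.le_def, multiFactorial]
  simp_rw [hlhs, ← sum_ite_factorialQuotient_eq, prod_univ_sum, sum_Iic_eq_sum_piFinset,
    Finsupp.inf_apply]
  refine sum_congr rfl fun x _ => ?_
  simp only [hcoord, vandermondeWeight_eq_prod, Finsupp.coe_equivFunOnFinite_symm,
    Fintype.prod_ite_zero]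

end MultiIndex

section Fock

variable {σ : Type*} [Fintype σ]

def fockNormSqOn (S : Finset (σ →₀ ℕ)) (c : (σ →₀ ℕ) → ℂ) : ℝ :=
  ∑ δ ∈ S, Complex.normSq (c δ) * multiFactorial δ

def fockNormSq (p : MvPolynomial σ ℂ) : ℝ := fockNormSqOn p.support fun α => p.coeff α

lemma fockNormSqOn_nonneg (S : Finset (σ →₀ ℕ)) (c : (σ →₀ ℕ) → ℂ) : 0 ≤ fockNormSqOn S c :=
  sum_nonneg fun _ _ => mul_nonneg (Complex.normSq_nonneg _) (Nat.cast_nonneg _)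

lemma fockNormSqOn_eq_of_subset {S S' : Finset (σ →₀ ℕ)} {c : (σ →₀ ℕ) → ℂ} (hS : S ⊆ S')
    (hc : ∀ δ ∉ S, c δ = 0) : fockNormSqOn S c = fockNormSqOn S' c :=
  sum_subset hS fun δ _ hδ => by simp [hc δ hδ]

lemma fockNormSqOn_congr {S S' : Finset (σ →₀ ℕ)} {c : (σ →₀ ℕ) → ℂ}
    (hc : ∀ δ ∉ S, c δ = 0) (hc' : ∀ δ ∉ S', c δ = 0) : fockNormSqOn S c = fockNormSqOn S' c := by
  rw [fockNormSqOn_eq_of_subset subset_union_left hc,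
    fockNormSqOn_eq_of_subset (subset_union_right (s₁ := S)) hc']

lemma fockNormSqOn_eq_re_sum (S : Finset (σ →₀ ℕ)) (c : (σ →₀ ℕ) → ℂ) :
    fockNormSqOn S c = (∑ δ ∈ S, conj (c δ) * c δ * ((multiFactorial δ : ℝ) : ℂ)).re := by
  rw [fockNormSqOn, Complex.re_sum]
  refine sum_congr rfl fun δ _ => ?_
  rw [← Complex.normSq_eq_conj_mul_self, ← Complex.ofReal_mul, Complex.ofReal_re]

/-- The summand of the expansion common to both sides of the Fock identity
`fockNormSq_mul_eq_sum`, with `γ, γ' ∈ supp f`, `α ∈ supp b` and `β` indexing `∂^β f`. -/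
def fockSummand (f b : MvPolynomial σ ℂ) (γ γ' α β : σ →₀ ℕ) : ℂ :=
  if β ≤ γ ∧ β ≤ γ' ∧ γ' - β ≤ α then
    conj (f.coeff γ * b.coeff α) * (f.coeff γ' * b.coeff (γ + α - γ'))
      * (vandermondeWeight γ γ' α β : ℂ)
  else 0

lemma sum_fockSummand [DecidableEq σ] {B : Finset (σ →₀ ℕ)} {γ γ' : σ →₀ ℕ} (hB : Iic (γ ⊓ γ') ⊆ B)
    (f b : MvPolynomial σ ℂ) (α : σ →₀ ℕ) :
    ∑ β ∈ B, fockSummand f b γ γ' α β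
      = conj (f.coeff γ * b.coeff α) * (f.coeff γ' * b.coeff (γ + α - γ'))
        * ((if γ' ≤ γ + α then (multiFactorial (γ + α) : ℝ) else 0 : ℝ) : ℂ) := by
  rw [factorial_add_eq_sum_vandermondeWeight, Complex.ofReal_sum, mul_sum]
  symm
  refine sum_subset_zero_on_sdiff hB (fun β hβ => ?_) (fun β hβ => ?_)
  · have hβ : ¬ (β ≤ γ ∧ β ≤ γ') := by simpa using (mem_sdiff.1 hβ).2
    simp only [fockSummand]
    rw [if_neg fun h => hβ ⟨h.1, h.2.1⟩]
  · have hβ : β ≤ γ ∧ β ≤ γ' := by simpa using hβ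
    by_cases h : γ' - β ≤ α <;> simp [fockSummand, hβ, h]

lemma fockNormSq_mul_eq_re_sum [DecidableEq σ] (f b : MvPolynomial σ ℂ) {B : Finset (σ →₀ ℕ)}
    (hB : ∀ γ ∈ f.support, Iic γ ⊆ B) :
    fockNormSq (f * b) = (∑ γ ∈ f.support, ∑ α ∈ b.support, ∑ γ' ∈ f.support, ∑ β ∈ B,
      fockSummand f b γ γ' α β).re := by
  set E := (f.support ×ˢ b.support).image fun p => p.1 + p.2
  have hE : ∀ γ ∈ f.support, ∀ α ∈ b.support, γ + α ∈ E := fun γ hγ α hα =>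
    mem_image.2 ⟨(γ, α), mem_product.2 ⟨hγ, hα⟩, rfl⟩
  have hsupp : (f * b).support ⊆ E := fun s hs => by
    obtain ⟨γ, hγ, α, hα, rfl⟩ := mem_add.1 (support_mul f b hs)
    exact hE γ hγ α hα
  rw [fockNormSq, fockNormSqOn_eq_of_subset hsupp (fun _ h => notMem_support_iff.1 h),
    fockNormSqOn_eq_re_sum]
  simp only [mul_assoc]
  rw [sum_conj_coeff_mul_mul f b hE]
  refine congrArg _ (sum_congr rfl fun γ hγ => sum_congr rfl fun α _ => ?_)
  rw [coeff_mul_eq_sum_support, sum_mul, mul_sum]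
  refine sum_congr rfl fun γ' _ => ?_
  rw [sum_fockSummand ((Iic_subset_Iic.2 inf_le_left).trans (hB γ hγ))]
  split_ifs <;> simp [mul_assoc]

/-- The `γ`-th summand of the coefficient of `z^δ` in `(∂^β f)^*(∂) b`, the Fock-space adjoint of
multiplication by `∂^β f` applied to `b`: `∂^β z^γ = γ!/(γ-β)! z^(γ-β)` and
`∂^(γ-β) z^(δ+γ-β) = (δ+γ-β)!/δ! z^δ`. -/
def adjointTerm (f b : MvPolynomial σ ℂ) (β δ γ : σ →₀ ℕ) : ℂ :=
  if β ≤ γ then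
    conj (f.coeff γ) * b.coeff (δ + (γ - β)) *
      ((multiFactorial γ : ℂ) * multiFactorial (δ + (γ - β)) /
        ((multiFactorial (γ - β) : ℂ) * multiFactorial δ))
  else 0

def adjointCoeff (f b : MvPolynomial σ ℂ) (β δ : σ →₀ ℕ) : ℂ :=
  ∑ γ ∈ f.support, adjointTerm f b β δ γ

def adjointSupport (f b : MvPolynomial σ ℂ) (β : σ →₀ ℕ) : Finset (σ →₀ ℕ) :=
  (f.support ×ˢ b.support).image fun p => p.2 - (p.1 - β)

lemma adjointCoeff_eq_zero {f b : MvPolynomial σ ℂ} {β δ : σ →₀ ℕ}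
    (h : δ ∉ adjointSupport f b β) : adjointCoeff f b β δ = 0 := by
  refine sum_eq_zero fun γ hγ => ?_
  unfold adjointTerm
  split_ifs
  · have hb : b.coeff (δ + (γ - β)) = 0 := by
      by_contra hb
      exact h (mem_image.2 ⟨(γ, δ + (γ - β)), mem_product.2 ⟨hγ, mem_support_iff.2 hb⟩,
        add_tsub_cancel_right δ (γ - β)⟩)
    rw [hb, mul_zero, zero_mul]
  · rfl

lemma sum_conj_adjointTerm_mul (f b : MvPolynomial σ ℂ) (β c c' : σ →₀ ℕ) (hc : c ∈ f.support) :
    ∑ δ ∈ adjointSupport f b β, ((multiFactorial β : ℝ)⁻¹ : ℂ) *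
        (conj (adjointTerm f b β δ c) * adjointTerm f b β δ c' * ((multiFactorial δ : ℝ) : ℂ))
      = ∑ α ∈ b.support, fockSummand f b c' c α β := by
  by_cases hβ : β ≤ c ∧ β ≤ c'
  swap
  · refine (sum_eq_zero fun δ _ => ?_).trans (sum_eq_zero fun α _ => ?_).symm
    · rcases not_and_or.1 hβ with h | h <;> simp [adjointTerm, h]
    · exact if_neg fun h => hβ ⟨h.2.1, h.1⟩
  obtain ⟨hc₁, hc₂⟩ := hβ
  have hS : ∀ α ∈ b.support, c - β ≤ α → α - (c - β) ∈ adjointSupport f b β := fun α hα _ =>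
    mem_image.2 ⟨(c, α), mem_product.2 ⟨hc, hα⟩, rfl⟩
  have hterm : ∀ δ, ((multiFactorial β : ℝ)⁻¹ : ℂ) *
      (conj (adjointTerm f b β δ c) * adjointTerm f b β δ c' * ((multiFactorial δ : ℝ) : ℂ))
      = conj (b.coeff (δ + (c - β))) * (((multiFactorial β : ℝ)⁻¹ : ℂ) * f.coeff c *
        ((multiFactorial c : ℂ) * multiFactorial (δ + (c - β)) /
          ((multiFactorial (c - β) : ℂ) * multiFactorial δ)) *
        adjointTerm f b β δ c' * ((multiFactorial δ : ℝ) : ℂ)) := fun δ => by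
    simp only [adjointTerm, if_pos hc₁, map_mul, map_div₀, map_natCast, Complex.conj_conj]
    ring
  -- reindex by `α = δ + (c - β)`
  rw [sum_congr rfl fun δ _ => hterm δ, sum_conj_coeff_add_mul b hS]
  refine sum_congr rfl fun α _ => ?_
  by_cases hα : c - β ≤ α
  swap
  · rw [if_neg hα, fockSummand, if_neg fun h => hα h.2.2]
  have h₁ : α - (c - β) + (c - β) = α := tsub_add_cancel_of_le hα
  have h₂ : α - (c - β) + (c' - β) = c' + α - c := by
    ext i
    have := Finsupp.le_def.1 hc₁ i
    have := Finsupp.le_def.1 hc₂ i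
    have := Finsupp.le_def.1 hα i
    simp only [Finsupp.coe_add, Finsupp.coe_tsub, Pi.add_apply, Pi.sub_apply] at *
    omega
  have hne : ∀ μ : σ →₀ ℕ, (multiFactorial μ : ℂ) ≠ 0 := fun μ =>
    Nat.cast_ne_zero.2 (multiFactorial_pos μ).ne'
  rw [if_pos hα, fockSummand, if_pos ⟨hc₂, hc₁, hα⟩, adjointTerm, if_pos hc₂, h₁, h₂,
    vandermondeWeight]
  have := hne β; have := hne (c - β); have := hne (c' - β); have := hne (α - (c - β))
  push_cast
  field_simp
  rw [map_mul]
  ring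

lemma fockNormSqOn_adjointCoeff_eq_re_sum (f b : MvPolynomial σ ℂ) (β : σ →₀ ℕ) :
    (multiFactorial β : ℝ)⁻¹ * fockNormSqOn (adjointSupport f b β) (adjointCoeff f b β)
      = (∑ γ ∈ f.support, ∑ γ' ∈ f.support, ∑ α ∈ b.support, fockSummand f b γ γ' α β).re := by
  rw [fockNormSqOn_eq_re_sum, ← Complex.re_ofReal_mul, mul_sum]
  congr 1
  simp only [adjointCoeff, map_sum, sum_mul, mul_sum]
  rw [sum_comm]
  refine sum_congr rfl fun γ _ => ?_
  rw [sum_comm]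
  refine sum_congr rfl fun γ' hγ' => ?_
  rw [← sum_conj_adjointTerm_mul f b β γ' γ hγ']
  exact sum_congr rfl fun δ _ => by push_cast; ring

/-- `‖(∂^β f)^*(∂) b‖² / β!`. -/
def fockComponent (f b : MvPolynomial σ ℂ) (β : σ →₀ ℕ) : ℝ :=
  (multiFactorial β : ℝ)⁻¹ * fockNormSqOn (adjointSupport f b β) (adjointCoeff f b β)

lemma fockComponent_nonneg (f b : MvPolynomial σ ℂ) (β : σ →₀ ℕ) : 0 ≤ fockComponent f b β :=
  mul_nonneg (by positivity) (fockNormSqOn_nonneg _ _)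

theorem fockNormSq_mul_eq_sum [DecidableEq σ] (f b : MvPolynomial σ ℂ) {B : Finset (σ →₀ ℕ)}
    (hB : ∀ γ ∈ f.support, Iic γ ⊆ B) :
    fockNormSq (f * b) = ∑ β ∈ B, fockComponent f b β := by
  simp_rw [fockComponent, fockNormSq_mul_eq_re_sum f b hB, fockNormSqOn_adjointCoeff_eq_re_sum,
    ← Complex.re_sum, sum_comm (s := b.support) (t := f.support),
    sum_comm (s := b.support) (t := B),
    sum_comm (s := f.support) (t := B)]

lemma fockComponent_eq_zero {f b : MvPolynomial σ ℂ} {β : σ →₀ ℕ} (h : ∀ γ ∈ f.support, ¬ β ≤ γ) :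
    fockComponent f b β = 0 := by
  have hzero : adjointCoeff f b β = 0 := funext fun δ => sum_eq_zero fun γ hγ => if_neg (h γ hγ)
  simp [fockComponent, fockNormSqOn, hzero]

lemma adjointTerm_pderiv [DecidableEq σ] (f b : MvPolynomial σ ℂ) (j : σ) (β δ γ : σ →₀ ℕ) :
    adjointTerm (pderiv j f) b β δ γ
      = adjointTerm f b (β + Finsupp.single j 1) δ (γ + Finsupp.single j 1) := by
  unfold adjointTerm
  rw [add_tsub_add_eq_tsub_right]
  by_cases h : β ≤ γ
  · rw [if_pos h, if_pos (add_le_add h le_rfl), coeff_pderiv, multiFactorial_add_single]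
    simp only [map_mul, map_add, map_natCast, map_one]
    push_cast
    ring
  · rw [if_neg h, if_neg fun h' => h (le_of_add_le_add_right h')]

lemma adjointCoeff_pderiv [DecidableEq σ] (f b : MvPolynomial σ ℂ) (j : σ) (β δ : σ →₀ ℕ) :
    adjointCoeff (pderiv j f) b β δ = adjointCoeff f b (β + Finsupp.single j 1) δ := by
  unfold adjointCoeff
  simp_rw [adjointTerm_pderiv]
  refine sum_bij_ne_zero (fun γ _ _ => γ + Finsupp.single j 1) (fun γ _ hγ => ?_)
    (fun _ _ _ _ _ _ h => add_right_cancel h) (fun α _ hα => ?_) (fun _ _ _ => rfl)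
  · refine mem_support_iff.2 fun h => hγ ?_
    simp [adjointTerm, h]
  · have hle : β + Finsupp.single j 1 ≤ α := by by_contra h; simp [adjointTerm, h] at hα
    have hjα : Finsupp.single j 1 ≤ α := le_trans le_add_self hle
    refine ⟨α - Finsupp.single j 1, mem_support_iff.2 ?_, ?_, tsub_add_cancel_of_le hjα⟩
    · rw [coeff_pderiv, tsub_add_cancel_of_le hjα]
      refine mul_ne_zero (fun h => hα ?_) (Nat.cast_add_one_ne_zero _)
      simp [adjointTerm, h]
    · rwa [tsub_add_cancel_of_le hjα]

lemma fockComponent_pderiv [DecidableEq σ] (f b : MvPolynomial σ ℂ) (j : σ) (β : σ →₀ ℕ) :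
    fockComponent (pderiv j f) b β
      = (β j + 1) * fockComponent f b (β + Finsupp.single j 1) := by
  have hcoeff := funext (adjointCoeff_pderiv f b j β)
  have hsupp : fockNormSqOn (adjointSupport (pderiv j f) b β) (adjointCoeff (pderiv j f) b β)
      = fockNormSqOn (adjointSupport f b (β + Finsupp.single j 1))
          (adjointCoeff f b (β + Finsupp.single j 1)) := by
    rw [hcoeff]
    refine fockNormSqOn_congr (fun δ hδ => ?_) (fun δ hδ => adjointCoeff_eq_zero hδ)
    rw [← hcoeff]
    exact adjointCoeff_eq_zero hδ
  rw [fockComponent, fockComponent, hsupp, multiFactorial_add_single, ← mul_assoc]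
  congr 1
  have : (multiFactorial β : ℝ) ≠ 0 := by exact_mod_cast (multiFactorial_pos β).ne'
  push_cast
  field_simp

lemma add_one_mul_fockComponent_le [DecidableEq σ] {f : MvPolynomial σ ℂ} {m : ℕ}
    (hf : f.IsHomogeneous m) (b : MvPolynomial σ ℂ) (j : σ) (β : σ →₀ ℕ) :
    (β j + 1) * fockComponent f b (β + Finsupp.single j 1)
      ≤ m * fockComponent f b (β + Finsupp.single j 1) := by
  by_cases h : ∃ γ ∈ f.support, β + Finsupp.single j 1 ≤ γ
  · obtain ⟨γ, hγ, hle⟩ := h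
    refine mul_le_mul_of_nonneg_right ?_ (fockComponent_nonneg _ _ _)
    have : β j + 1 ≤ m := by
      simpa using (Finsupp.le_def.1 hle j).trans (apply_le_of_mem_support hf hγ j)
    exact_mod_cast this
  · push Not at h
    simp [fockComponent_eq_zero h]

theorem fockNormSq_pderiv_mul_le [DecidableEq σ] {f : MvPolynomial σ ℂ} {m : ℕ}
    (hf : f.IsHomogeneous m) (b : MvPolynomial σ ℂ) (j : σ) :
    fockNormSq (pderiv j f * b) ≤ m * fockNormSq (f * b) := by
  set B := f.support.biUnion Iic
  have hB : ∀ γ ∈ (pderiv j f).support, Iic γ ⊆ B := fun γ hγ => by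
    have : γ + Finsupp.single j 1 ∈ f.support := by
      rw [mem_support_iff, coeff_pderiv] at hγ
      exact mem_support_iff.2 (left_ne_zero_of_mul hγ)
    exact (Iic_subset_Iic.2 le_self_add).trans (subset_biUnion_of_mem Iic this)
  have hB' : ∀ γ ∈ f.support, Iic γ ⊆ B ∪ B.image (· + Finsupp.single j 1) := fun γ hγ =>
    (subset_biUnion_of_mem Iic hγ).trans subset_union_left
  rw [fockNormSq_mul_eq_sum _ b hB, fockNormSq_mul_eq_sum f b hB', mul_sum]
  calc ∑ β ∈ B, fockComponent (pderiv j f) b β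
      = ∑ β ∈ B, (β j + 1) * fockComponent f b (β + Finsupp.single j 1) :=
        sum_congr rfl fun β _ => fockComponent_pderiv f b j β
    _ ≤ ∑ β ∈ B, m * fockComponent f b (β + Finsupp.single j 1) :=
        sum_le_sum fun β _ => add_one_mul_fockComponent_le hf b j β
    _ = ∑ β ∈ B.image (· + Finsupp.single j 1), (m : ℝ) * fockComponent f b β := by
        rw [sum_image fun _ _ _ _ h => add_right_cancel h]
    _ ≤ ∑ β ∈ B ∪ B.image (· + Finsupp.single j 1), m * fockComponent f b β :=
        sum_le_sum_of_subset_of_nonneg subset_union_right fun β _ _ =>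
          mul_nonneg (Nat.cast_nonneg m) (fockComponent_nonneg f b β)

end Fock

section DruryArvesonNorm

variable {d : ℕ}

lemma daW_nonneg (α : Fin d →₀ ℕ) : 0 ≤ daW α := by unfold daW; positivity

lemma daNormSq_nonneg (p : MvPolynomial (Fin d) ℂ) : 0 ≤ daNormSq p :=
  sum_nonneg fun α _ => mul_nonneg (sq_nonneg _) (daW_nonneg α)

lemma daNormSq_eq_sum_of_support_subset {p : MvPolynomial (Fin d) ℂ} {S : Finset (Fin d →₀ ℕ)}
    (hS : p.support ⊆ S) : daNormSq p = ∑ α ∈ S, ‖p.coeff α‖ ^ 2 * daW α :=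
  sum_subset hS fun α _ hα => by simp [notMem_support_iff.1 hα]

lemma daNormSq_eq_fockNormSq_div {p : MvPolynomial (Fin d) ℂ} {N : ℕ} (hp : p.IsHomogeneous N) :
    daNormSq p = fockNormSq p / N ! := by
  rw [daNormSq, fockNormSq, fockNormSqOn, sum_div]
  refine sum_congr rfl fun α hα => ?_
  have hdeg : mdeg α = N := by
    rw [show mdeg α = α.degree from rfl, Finsupp.degree_eq_weight_one]
    exact hp (mem_support_iff.1 hα)
  rw [daW, hdeg, multiFactorial, Complex.sq_norm]
  push_cast
  ring

theorem daNormSq_mul_pderiv_le {F b : MvPolynomial (Fin d) ℂ} {m ℓ : ℕ} (hF : F.IsHomogeneous m)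
    (hb : b.IsHomogeneous ℓ) (j : Fin d) :
    daNormSq (b * pderiv j F) ≤ m * (ℓ + m) * daNormSq (b * F) := by
  rw [daNormSq_eq_fockNormSq_div (hb.mul hF.pderiv), daNormSq_eq_fockNormSq_div (hb.mul hF),
    mul_comm b, mul_comm b]
  have hfact : (m : ℝ) * (ℓ + m) / (ℓ + m)! = m / (ℓ + (m - 1))! := by
    rcases Nat.eq_zero_or_pos m with rfl | hm
    · simp
    rw [show ℓ + m = ℓ + (m - 1) + 1 by omega, Nat.factorial_succ]
    have : (ℓ : ℝ) + m ≠ 0 := by positivity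
    push_cast [Nat.cast_sub hm]
    rw [add_assoc, sub_add_cancel, mul_comm (m : ℝ), mul_div_mul_left _ _ this]
  calc fockNormSq (pderiv j F * b) / (ℓ + (m - 1))!
      ≤ m * fockNormSq (F * b) / (ℓ + (m - 1))! := by
        gcongr
        exact fockNormSq_pderiv_mul_le hF b j
    _ = m * (ℓ + m) * (fockNormSq (F * b) / (ℓ + m)!) := by
        rw [← mul_div_assoc, mul_div_right_comm ((m : ℝ) * (ℓ + m)), hfact, mul_div_right_comm]

lemma daNormSq_add (p q : MvPolynomial (Fin d) ℂ) :
    daNormSq (p + q) = daNormSq p + daNormSq q + 2 * (daInner p q).re := by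
  set S := p.support ∪ q.support
  have hpq : (p + q).support ⊆ S := support_add
  rw [daNormSq_eq_sum_of_support_subset hpq, daNormSq_eq_sum_of_support_subset subset_union_left,
    daNormSq_eq_sum_of_support_subset subset_union_right, daInner, Complex.re_sum, mul_sum,
    ← sum_add_distrib, ← sum_add_distrib]
  refine sum_congr rfl fun α _ => ?_
  rw [coeff_add, Complex.sq_norm, Complex.sq_norm, Complex.sq_norm, Complex.normSq_add,
    Complex.re_mul_ofReal]
  simp only [Complex.mul_re, Complex.conj_re, Complex.conj_im]
  ring

lemma daNormSq_smul (c : ℂ) (p : MvPolynomial (Fin d) ℂ) :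
    daNormSq (c • p) = ‖c‖ ^ 2 * daNormSq p := by
  rw [daNormSq_eq_sum_of_support_subset support_smul, daNormSq, mul_sum]
  refine sum_congr rfl fun α _ => ?_
  rw [coeff_smul, smul_eq_mul, norm_mul, mul_pow, mul_assoc]

lemma daNormSq_sum_le {ι : Type*} (s : Finset ι) (P : ι → MvPolynomial (Fin d) ℂ) :
    daNormSq (∑ i ∈ s, P i) ≤ #s * ∑ i ∈ s, daNormSq (P i) := by
  set S := s.biUnion fun i => (P i).support
  have hsub : ∀ i ∈ s, (P i).support ⊆ S := fun i hi =>
    subset_biUnion_of_mem (fun i => (P i).support) hi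
  have hsum : (∑ i ∈ s, P i).support ⊆ S := fun α hα => by
    obtain ⟨i, hi, hne⟩ := exists_ne_zero_of_sum_ne_zero (by rwa [mem_support_iff, coeff_sum] at hα)
    exact hsub i hi (mem_support_iff.2 hne)
  rw [daNormSq_eq_sum_of_support_subset hsum,
    sum_congr rfl fun i hi => daNormSq_eq_sum_of_support_subset (hsub i hi), sum_comm, mul_sum]
  refine sum_le_sum fun α _ => ?_
  rw [← sum_mul, ← mul_assoc]
  refine mul_le_mul_of_nonneg_right ?_ (daW_nonneg α)
  calc ‖(∑ i ∈ s, P i).coeff α‖ ^ 2 ≤ (∑ i ∈ s, ‖(P i).coeff α‖) ^ 2 := by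
        rw [coeff_sum]
        exact pow_le_pow_left₀ (norm_nonneg _) (norm_sum_le _ _) 2
    _ ≤ #s * ∑ i ∈ s, ‖(P i).coeff α‖ ^ 2 := sq_sum_le_card_mul_sum_sq

lemma daNormSq_homogeneousComponent_le (N : ℕ) (p : MvPolynomial (Fin d) ℂ) :
    daNormSq (homogeneousComponent N p) ≤ daNormSq p := by
  have hsub : (homogeneousComponent N p).support ⊆ p.support := by
    rw [support_homogeneousComponent]
    exact filter_subset _ _
  rw [daNormSq_eq_sum_of_support_subset hsub, daNormSq]
  refine sum_le_sum fun α _ => ?_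
  rw [coeff_homogeneousComponent]
  split_ifs
  · rfl
  · simpa using mul_nonneg (sq_nonneg ‖p.coeff α‖) (daW_nonneg α)

end DruryArvesonNorm

section VectorValued

variable {d r : ℕ}

lemma vNormSq_nonneg (p : Fin r → MvPolynomial (Fin d) ℂ) : 0 ≤ vNormSq p :=
  sum_nonneg fun t _ => daNormSq_nonneg (p t)

lemma vNorm_sq (p : Fin r → MvPolynomial (Fin d) ℂ) : vNorm p ^ 2 = vNormSq p :=
  Real.sq_sqrt (vNormSq_nonneg p)

lemma vNormSq_le_add_of_vInner_eq_zero {x y : Fin r → MvPolynomial (Fin d) ℂ}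
    (h : vInner x y = 0) : vNormSq y ≤ vNormSq (x + y) := by
  have hadd : vNormSq (x + y) = vNormSq x + vNormSq y + 2 * (vInner x y).re := by
    simp only [vNormSq, vInner, Pi.add_apply, daNormSq_add, sum_add_distrib, Complex.re_sum,
      mul_sum]
  rw [hadd, h, Complex.zero_re, mul_zero, add_zero]
  linarith [vNormSq_nonneg x]

lemma norm_inv_natCast_add_one (n : ℕ) : ‖((n : ℂ) + 1)⁻¹‖ = ((n : ℝ) + 1)⁻¹ := by
  rw [norm_inv]
  exact_mod_cast congrArg Inv.inv (Complex.norm_natCast (n + 1))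

lemma vNormSq_smul (c : ℂ) (p : Fin r → MvPolynomial (Fin d) ℂ) :
    vNormSq (c • p) = ‖c‖ ^ 2 * vNormSq p := by
  simp only [vNormSq, Pi.smul_apply, daNormSq_smul, mul_sum]

lemma vNormSq_sum_le {k : ℕ} (P : Fin k → Fin r → MvPolynomial (Fin d) ℂ) :
    vNormSq (∑ i, P i) ≤ k * ∑ i, vNormSq (P i) := by
  simp only [vNormSq, Finset.sum_apply]
  rw [sum_comm, mul_sum]
  refine sum_le_sum fun t _ => ?_
  simpa using daNormSq_sum_le univ fun i => P i t

lemma vNormSq_smul_pderiv_le {b : MvPolynomial (Fin d) ℂ} {g : Fin r → MvPolynomial (Fin d) ℂ}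
    {ℓ m : ℕ} (hb : b.IsHomogeneous ℓ) (hg : vHomog g m) (j : Fin d) :
    vNormSq (b • fun t => pderiv j (g t)) ≤ m * (ℓ + m) * vNormSq (b • g) := by
  simp only [vNormSq, Pi.smul_apply, smul_eq_mul, mul_sum]
  exact sum_le_sum fun t _ => daNormSq_mul_pderiv_le (hg t) hb j

lemma vNormSq_homogeneousComponent_smul_le {g : Fin r → MvPolynomial (Fin d) ℂ} {m : ℕ}
    (hg : vHomog g m) (ℓ : ℕ) (a : MvPolynomial (Fin d) ℂ) :
    vNormSq (homogeneousComponent ℓ a • g) ≤ vNormSq (a • g) := by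
  refine sum_le_sum fun t _ => ?_
  simp only [Pi.smul_apply, smul_eq_mul]
  rw [← homogeneousComponent_mul_of_isHomogeneous (hg t) a ℓ]
  exact daNormSq_homogeneousComponent_le _ _

lemma eq_sum_homogeneousComponent_smul {k m ℓ : ℕ} {f : Fin k → Fin r → MvPolynomial (Fin d) ℂ}
    (hf : ∀ i, vHomog (f i) m) {h : Fin r → MvPolynomial (Fin d) ℂ} (hh : vHomog h (ℓ + m))
    {a : Fin k → MvPolynomial (Fin d) ℂ} (ha : h = ∑ i, a i • f i) :
    h = ∑ i, homogeneousComponent ℓ (a i) • f i := by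
  funext t
  have := congrArg (homogeneousComponent (ℓ + m)) (congrFun ha t)
  simp only [Finset.sum_apply, Pi.smul_apply, smul_eq_mul, map_sum,
    homogeneousComponent_eq_self (hh t)] at this ⊢
  rw [this]
  exact sum_congr rfl fun i _ => homogeneousComponent_mul_of_isHomogeneous (hf i t) _ ℓ

lemma sum_vNormSq_le_of_sum_vNorm_le {k : ℕ} {x y : Fin k → Fin r → MvPolynomial (Fin d) ℂ}
    {h : Fin r → MvPolynomial (Fin d) ℂ} {C : ℝ} (hx : ∑ i, vNorm (x i) ≤ C * vNorm h)
    (hyx : ∀ i, vNormSq (y i) ≤ vNormSq (x i)) :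
    ∑ i, vNormSq (y i) ≤ max C 0 ^ 2 * vNormSq h := by
  have hnonneg : ∀ i ∈ univ, 0 ≤ vNorm (x i) := fun i _ => Real.sqrt_nonneg _
  calc ∑ i, vNormSq (y i) ≤ ∑ i, vNorm (x i) ^ 2 := by
        simpa only [vNorm_sq] using sum_le_sum fun i _ => hyx i
    _ ≤ (∑ i, vNorm (x i)) ^ 2 := sum_sq_le_sq_sum_of_nonneg hnonneg
    _ ≤ (max C 0 * vNorm h) ^ 2 := by
        gcongr
        · exact sum_nonneg hnonneg
        · exact hx.trans (mul_le_mul_of_nonneg_right (le_max_left C 0) (Real.sqrt_nonneg _))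
    _ = max C 0 ^ 2 * vNormSq h := by rw [mul_pow, vNorm_sq]

variable {k m : ℕ} {f : Fin k → Fin r → MvPolynomial (Fin d) ℂ}

lemma vNormSq_sum_smul_pderiv_le {b : Fin k → MvPolynomial (Fin d) ℂ} {ℓ : ℕ}
    (hb : ∀ i, (b i).IsHomogeneous ℓ) (hf : ∀ i, vHomog (f i) m) (j : Fin d) :
    vNormSq (∑ i, b i • fun t => pderiv j (f i t))
      ≤ k * (m * (ℓ + m)) * ∑ i, vNormSq (b i • f i) := by
  rw [mul_assoc, mul_sum]
  exact (vNormSq_sum_le _).trans <| mul_le_mul_of_nonneg_left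
    (sum_le_sum fun i _ => vNormSq_smul_pderiv_le (hb i) (hf i) j) (Nat.cast_nonneg k)

lemma exists_mem_span_smul_pderiv_eq {b : Fin k → MvPolynomial (Fin d) ℂ} {ℓ : ℕ}
    (hb : ∀ i, (b i).IsHomogeneous (ℓ + 1)) (hf : ∀ i, vHomog (f i) m)
    {h : Fin r → MvPolynomial (Fin d) ℂ} (hbh : h = ∑ i, b i • f i) (c : ℂ) (j : Fin d) :
    ∃ h' ∈ Submodule.span (MvPolynomial (Fin d) ℂ) (Set.range f), vHomog h' (ℓ + m) ∧
      (fun t => c • pderiv j (h t)) = h' + c • ∑ i, b i • fun t => pderiv j (f i t) := by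
  refine ⟨c • ∑ i, pderiv j (b i) • f i, Submodule.smul_of_tower_mem _ c <|
    Submodule.sum_mem _ fun i _ => Submodule.smul_mem _ _ (Submodule.subset_span ⟨i, rfl⟩),
    fun t => ?_, ?_⟩
  · have hsum : (∑ i, pderiv j (b i) * f i t).IsHomogeneous (ℓ + m) :=
      IsHomogeneous.sum _ _ _ fun i _ => by simpa using (hb i).pderiv.mul (hf i t)
    simpa [smul_eq_C_mul] using hsum.C_mul c
  · funext t
    simp only [hbh, Finset.sum_apply, Pi.add_apply, Pi.smul_apply, smul_eq_mul, map_sum,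
      pderiv_mul, sum_add_distrib, ← smul_add]

end VectorValued

end DruryArveson

open DruryArveson in
/-- if `f_1,…,f_k` is a stable generating set of homogeneous degree-`m`
elements of `M ⊆ H²_d ⊗ ℂ^r` with constant `C`, then there is `C'` such that for all
`n ≥ m`: for `h ∈ M_{n+1}`, the component of `Z_j^* h = (n+1)⁻¹ ∂_j h` orthogonal to
`M_n` has norm at most `C'(n+1)^{-1/2} ‖h‖`; that is,
`‖P_n Z_j^* (E_{n+1} - P_{n+1}E_{n+1})‖ ≤ C'(n+1)^{-1/2}`. -/
theorem stmt15 (d r k m : ℕ) (Cst : ℝ)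
    (f : Fin k → (Fin r → MvPolynomial (Fin d) ℂ))
    (hfhom : ∀ i, vHomog (f i) m)
    (hstable : ∀ (n : ℕ),
      ∀ h ∈ Submodule.span (MvPolynomial (Fin d) ℂ) (Set.range f), vHomog h n →
        ∃ a : Fin k → MvPolynomial (Fin d) ℂ,
          h = ∑ i, a i • f i ∧ ∑ i, vNorm (a i • f i) ≤ Cst * vNorm h) :
    ∃ C' : ℝ, 0 ≤ C' ∧ ∀ n, m ≤ n → ∀ j : Fin d,
      ∀ h ∈ Submodule.span (MvPolynomial (Fin d) ℂ) (Set.range f), vHomog h (n + 1) →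
        ∀ u v : Fin r → MvPolynomial (Fin d) ℂ,
          u ∈ Submodule.span (MvPolynomial (Fin d) ℂ) (Set.range f) →
          vHomog u n → vHomog v n →
          (∀ h' ∈ Submodule.span (MvPolynomial (Fin d) ℂ) (Set.range f),
            vHomog h' n → vInner h' v = 0) →
          (fun t => (((n : ℂ) + 1))⁻¹ • pderiv j (h t)) = u + v →
          vNormSq v ≤ C' ^ 2 / ((n : ℝ) + 1) * vNormSq h := by
  refine ⟨Real.sqrt (k * m) * max Cst 0, by positivity, ?_⟩
  intro n hn j h hh hhom u v hu huhom _ horth heq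
  obtain ⟨ℓ, rfl⟩ : ∃ ℓ, n = ℓ + m := ⟨n - m, by omega⟩
  obtain ⟨a, ha, hnorm⟩ := hstable _ h hh hhom
  set b := fun i => homogeneousComponent (ℓ + 1) (a i)
  have hbound : ∑ i, vNormSq (b i • f i) ≤ max Cst 0 ^ 2 * vNormSq h :=
    sum_vNormSq_le_of_sum_vNorm_le hnorm fun i =>
      vNormSq_homogeneousComponent_smul_le (hfhom i) (ℓ + 1) (a i)
  obtain ⟨h', hh'span, hh'hom, hsplit⟩ :=
    exists_mem_span_smul_pderiv_eq (fun i => homogeneousComponent_isHomogeneous _ _) hfhom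
      (eq_sum_homogeneousComponent_smul hfhom (by rwa [add_right_comm] at hhom) ha) _ j
  have hv := eq_sub_of_add_eq' (hsplit ▸ heq)
  rw [← sub_add_eq_add_sub] at hv
  calc vNormSq v
      ≤ vNormSq ((((ℓ + m : ℕ) : ℂ) + 1)⁻¹ • ∑ i, b i • fun t => pderiv j (f i t)) :=
        hv ▸ vNormSq_le_add_of_vInner_eq_zero
          (horth _ (Submodule.sub_mem _ hu hh'span) fun t => (huhom t).sub (hh'hom t))
    _ ≤ (((ℓ + m : ℕ) : ℝ) + 1)⁻¹ ^ 2
          * (k * (m * (((ℓ + 1 : ℕ) : ℝ) + m)) * (max Cst 0 ^ 2 * vNormSq h)) := by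
        rw [vNormSq_smul, norm_inv_natCast_add_one]
        gcongr
        exact (vNormSq_sum_smul_pderiv_le (fun i => homogeneousComponent_isHomogeneous _ _)
          hfhom j).trans (by gcongr)
    _ = (Real.sqrt (k * m) * max Cst 0) ^ 2 / (((ℓ + m : ℕ) : ℝ) + 1) * vNormSq h := by
        rw [mul_pow, Real.sq_sqrt (by positivity)]
        push_cast
        field_simp
        ring
end
end
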